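/- Every Φ2-feasible tuple (q, n, p, (P_k)_{k∈𝒦}) is Φ1-feasible. -/

import Mathlib

noncomputable def alphaC : ℝ := -3 - 9 * Real.log (2 / 3)

noncomputable def Delta1 (d : ℕ) (δ q : ℝ) : ℝ :=
  Real.sqrt d * (q - 1) + Real.sqrt (2 * Real.sqrt d * (q - 1) * Real.log (2 / δ)) +
    (4 / 3) * Real.log (2 / δ)

noncomputable def Delta2 (d : ℕ) (δ q : ℝ) : ℝ :=
  (q - 1) + Real.sqrt (Delta1 d δ q + Real.sqrt (2 * Real.sqrt d * (q - 1) * Real.log (2 / δ)))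

def DeltaInf (q : ℝ) : ℝ := q + 1

noncomputable def S1 (n p : ℝ) : ℝ :=
  ((3 * p ^ 2 - 3 * p + 1) / (n * (n + 1) * (n + 2) * p ^ 2 * (1 - p) ^ 2)) *
    (3 * n + 2 + 2 / (p * (1 - p)))

noncomputable def S2 (d : ℕ) (δ n p : ℝ) : ℝ :=
  (Real.sqrt (2 * n * p * (1 - p) * Real.log (20 * d / δ)) + 1 +
    (2 / 3) * max p (1 - p) * Real.log (20 * d / δ)) ^ 2

/-- The privacy budget estimate ε(q, n, p). -/
noncomputable def eps (d : ℕ) (δ q n p : ℝ) : ℝ :=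
  Delta2 d δ q * Real.sqrt (2 * Real.log (1.25 / δ)) / Real.sqrt (n * p * (1 - p)) +
  alphaC * Delta1 d δ q * (n * p * (1 - p) + 1) * (p ^ 2 + (1 - p) ^ 2) /
    (n ^ 2 * p ^ 2 * (1 - p) ^ 2 * (1 - δ / 10)) +
  (Delta2 d δ q / Real.sqrt (1 - δ / 10)) * Real.sqrt (2 * S1 n p * Real.log (10 / δ)) +
  (2 / 3) * alphaC * S2 d δ n p * (p ^ 2 + (1 - p) ^ 2) * Real.log (10 / δ) * DeltaInf q /
    (n ^ 2 * p ^ 2 * (1 - p) ^ 2) +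
  2 * Real.log (1.25 / δ) * DeltaInf q / (n * p * (1 - p))

/-- The channel-capacity constant C = (1 + min_k P^max_k h_k / ω₀)^{TW/d}. -/
noncomputable def Cval {ι : Type*} [Fintype ι] [Nonempty ι] (d : ℕ) (T W ω₀ : ℝ)
    (h Pmax : ι → ℝ) : ℝ :=
  (1 + Finset.univ.inf' Finset.univ_nonempty (fun k => Pmax k * h k / ω₀)) ^ (T * W / (d : ℝ))

/-- The objective φ(q, n, p) = (1 + n p (1-p)) / (q-1)². -/
noncomputable def phi (q n : ℤ) (p : ℝ) : ℝ :=
  (1 + (n : ℝ) * p * (1 - p)) / ((q : ℝ) - 1) ^ 2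

/-- Feasibility for problem (Φ1). -/
def Phi1Feasible {ι : Type*} [Fintype ι] [Nonempty ι] (d : ℕ) (δ : ℝ) (K : ℕ)
    (eb T W ω₀ : ℝ) (h Pmin Pmax : ι → ℝ) (q n : ℤ) (p : ℝ) (P : ι → ℝ) : Prop :=
  (2 ≤ q ∧ q ≤ ⌊Cval d T W ω₀ h Pmax⌋ - 2) ∧
  (2 ≤ n ∧ n ≤ ⌊Cval d T W ω₀ h Pmax⌋ - 2) ∧
  (0 < p ∧ p < 1) ∧
  max (23 * Real.log (10 * d / δ)) (2 * ((q : ℝ) + 1)) ≤ (K : ℝ) * (n : ℝ) * p * (1 - p) ∧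
  eps d δ (q : ℝ) (n : ℝ) p ≤ eb ∧
  (∀ k, (d : ℝ) * Real.logb 2 ((q : ℝ) + (n : ℝ)) ≤
    T * W * Real.logb 2 (1 + P k * h k / ω₀)) ∧
  (∀ k, Pmin k ≤ P k ∧ P k ≤ Pmax k)

/-- n₁(q, p): the least positive integer n' with ε(q, n', p) ≤ ε̄. -/
noncomputable def nOne (d : ℕ) (δ eb : ℝ) (q : ℤ) (p : ℝ) : ℕ :=
  sInf {n' : ℕ | 1 ≤ n' ∧ eps d δ (q : ℝ) (n' : ℝ) p ≤ eb}

/-- Feasibility for problem (Φ2). -/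
def Phi2Feasible {ι : Type*} [Fintype ι] [Nonempty ι] (d : ℕ) (δ : ℝ) (K : ℕ)
    (eb T W ω₀ : ℝ) (h Pmin Pmax : ι → ℝ) (q n : ℤ) (p : ℝ) (P : ι → ℝ) : Prop :=
  (2 ≤ q ∧ q ≤ ⌊Cval d T W ω₀ h Pmax⌋ - 2) ∧
  (2 ≤ n ∧ n ≤ ⌊Cval d T W ω₀ h Pmax⌋ - 2) ∧
  (0 < p ∧ p < 1) ∧
  ((q : ℝ) + (n : ℝ) ≤ Cval d T W ω₀ h Pmax) ∧
  n = max ⌈max (23 * Real.log (10 * d / δ)) (2 * ((q : ℝ) + 1)) / ((K : ℝ) * p * (1 - p))⌉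
        ((nOne d δ eb q p : ℤ)) ∧
  (∀ k, P k = min (Pmax k)
    (max (Pmin k) (ω₀ * (((q : ℝ) + (n : ℝ)) ^ ((d : ℝ) / (T * W)) - 1) / h k)))

/-!
Only the privacy constraint needs an argument. For fixed `q` and `p`, `ε(q, ·, p)` is a
nonnegative combination of `n⁻¹`, `(√n)⁻¹`, `√(S₁(n, p))` and `S₂(n, p) / n²`, and each of these
is nonnegative, antitone on `(0, ∞)` and tends to `0`. Hence `n₁(q, p)` exists, and every
`n ≥ n₁(q, p)` satisfies `ε(q, n, p) ≤ ε(q, n₁(q, p), p) ≤ ε̄`. The rate constraint holds because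
`q + n ≤ C` makes the clamp at `P^max_k` inactive, and the counting constraint is the ceiling in
the definition of `n`.
-/

open Real Filter Topology Set

structure DecaysToZero (f : ℝ → ℝ) : Prop where
  nonneg : ∀ x, 0 < x → 0 ≤ f x
  antitoneOn : AntitoneOn f (Ioi 0)
  tendsto : Tendsto f atTop (𝓝 0)

namespace DecaysToZero

variable {f g : ℝ → ℝ}

theorem congr (hf : DecaysToZero f) (hfg : ∀ x, 0 < x → f x = g x) : DecaysToZero g where
  nonneg x hx := hfg x hx ▸ hf.nonneg x hx
  antitoneOn x hx y hy hxy := by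
    rw [← hfg x hx, ← hfg y hy]
    exact hf.antitoneOn hx hy hxy
  tendsto := hf.tendsto.congr' <| (eventually_gt_atTop 0).mono hfg

theorem add (hf : DecaysToZero f) (hg : DecaysToZero g) : DecaysToZero (fun x => f x + g x) where
  nonneg x hx := add_nonneg (hf.nonneg x hx) (hg.nonneg x hx)
  antitoneOn := hf.antitoneOn.add hg.antitoneOn
  tendsto := by simpa using hf.tendsto.add hg.tendsto

theorem mul (hf : DecaysToZero f) (hg : DecaysToZero g) : DecaysToZero (fun x => f x * g x) where
  nonneg x hx := mul_nonneg (hf.nonneg x hx) (hg.nonneg x hx)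
  antitoneOn x hx y hy hxy :=
    mul_le_mul (hf.antitoneOn hx hy hxy) (hg.antitoneOn hx hy hxy) (hg.nonneg y hy)
      (hf.nonneg x hx)
  tendsto := by simpa using hf.tendsto.mul hg.tendsto

theorem const_mul (hf : DecaysToZero f) {a : ℝ} (ha : 0 ≤ a) : DecaysToZero (fun x => a * f x) where
  nonneg x hx := mul_nonneg ha (hf.nonneg x hx)
  antitoneOn x hx y hy hxy := mul_le_mul_of_nonneg_left (hf.antitoneOn hx hy hxy) ha
  tendsto := by simpa using hf.tendsto.const_mul a

theorem sqrt (hf : DecaysToZero f) : DecaysToZero (fun x => √(f x)) where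
  nonneg _ _ := Real.sqrt_nonneg _
  antitoneOn x hx y hy hxy := Real.sqrt_le_sqrt (hf.antitoneOn hx hy hxy)
  tendsto := by simpa using hf.tendsto.sqrt

end DecaysToZero

theorem decaysToZero_inv_add {c : ℝ} (hc : 0 ≤ c) : DecaysToZero (fun x => (x + c)⁻¹) where
  nonneg x hx := by positivity
  antitoneOn x hx _ _ hxy := inv_anti₀ (add_pos_of_pos_of_nonneg hx hc) (by linarith)
  tendsto := tendsto_inv_atTop_zero.comp (tendsto_atTop_add_const_right _ c tendsto_id)

theorem decaysToZero_inv_sqrt : DecaysToZero (fun x => (√x)⁻¹) where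
  nonneg x hx := by positivity
  antitoneOn x hx _ _ hxy := inv_anti₀ (Real.sqrt_pos.2 hx) (Real.sqrt_le_sqrt hxy)
  tendsto := tendsto_inv_atTop_zero.comp tendsto_sqrt_atTop

theorem decaysToZero_inv : DecaysToZero (fun x => x⁻¹) :=
  (decaysToZero_inv_add le_rfl).congr fun x _ => by rw [add_zero]

theorem decaysToZero_S1 {p : ℝ} (hp0 : 0 < p) (hp1 : p < 1) : DecaysToZero (fun n => S1 n p) := by
  have hcoeff : 0 ≤ (3 * p ^ 2 - 3 * p + 1) / (p ^ 2 * (1 - p) ^ 2) :=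
    div_nonneg (by nlinarith [sq_nonneg (2 * p - 1)]) (by positivity)
  -- partial fractions: `(3n + 2) / (n (n + 1)) = 2 / n + 1 / (n + 1)`
  have hsum : DecaysToZero (fun n => 2 * n⁻¹ + (n + 1)⁻¹ + 2 / (p * (1 - p)) * (n⁻¹ * (n + 1)⁻¹)) :=
    ((decaysToZero_inv.const_mul zero_le_two).add (decaysToZero_inv_add zero_le_one)).add
      ((decaysToZero_inv.mul (decaysToZero_inv_add zero_le_one)).const_mul (by positivity))
  refine ((hsum.mul (decaysToZero_inv_add zero_le_two)).const_mul hcoeff).congr fun n hn => ?_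
  unfold S1
  field_simp
  ring

theorem decaysToZero_S2_div_sq (d : ℕ) {δ : ℝ} (p : ℝ)
    (hL : 0 ≤ Real.log (20 * d / δ)) : DecaysToZero (fun n => S2 d δ n p / n ^ 2) := by
  unfold S2
  generalize Real.log (20 * d / δ) = L at hL ⊢
  have hb : 0 ≤ 1 + 2 / 3 * max p (1 - p) * L := by
    have : 0 ≤ max p (1 - p) := by linarith [le_max_left p (1 - p), le_max_right p (1 - p)]
    positivity
  have hg : DecaysToZero
      (fun n => √(2 * p * (1 - p) * L) * (√n)⁻¹ + (1 + 2 / 3 * max p (1 - p) * L) * n⁻¹) :=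
    (decaysToZero_inv_sqrt.const_mul (Real.sqrt_nonneg _)).add (decaysToZero_inv.const_mul hb)
  refine (hg.mul hg).congr fun n hn => ?_
  obtain ⟨s, hs, rfl⟩ : ∃ s : ℝ, 0 < s ∧ n = s ^ 2 :=
    ⟨√n, Real.sqrt_pos.2 hn, (Real.sq_sqrt hn.le).symm⟩
  rw [show 2 * s ^ 2 * p * (1 - p) * L = s ^ 2 * (2 * p * (1 - p) * L) by ring,
    Real.sqrt_mul (sq_nonneg s), Real.sqrt_sq hs.le]
  field_simp
  ring

theorem alphaC_pos : 0 < alphaC := by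
  have hexp : exp (1 / 3) < 3 / 2 := by
    have hcube : exp 1 = exp (1 / 3) ^ 3 := by rw [← exp_nat_mul]; norm_num
    nlinarith [exp_pos (1 / 3), exp_one_lt_d9, sq_nonneg (exp (1 / 3) - 3 / 2)]
  have hlog : Real.log (2 / 3) < -(1 / 3) := by
    rw [log_lt_iff_lt_exp (by norm_num), exp_neg, lt_inv_comm₀ (by norm_num) (exp_pos _)]
    linarith
  unfold alphaC
  linarith

theorem Delta1_nonneg (d : ℕ) {δ q : ℝ} (hδ0 : 0 < δ) (hδ2 : δ ≤ 2) (hq : 1 ≤ q) :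
    0 ≤ Delta1 d δ q := by
  have hlog : 0 ≤ Real.log (2 / δ) := log_nonneg ((one_le_div hδ0).2 hδ2)
  unfold Delta1
  have : 0 ≤ q - 1 := by linarith
  positivity

theorem Delta2_nonneg (d : ℕ) (δ : ℝ) {q : ℝ} (hq : 1 ≤ q) : 0 ≤ Delta2 d δ q := by
  unfold Delta2
  have : 0 ≤ q - 1 := by linarith
  positivity

theorem decaysToZero_eps (d : ℕ) {δ q p : ℝ} (hδ0 : 0 < δ) (hδ1 : δ ≤ 1) (hq : 1 ≤ q)
    (hp0 : 0 < p) (hp1 : p < 1) : DecaysToZero (fun n => eps d δ q n p) := by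
  have hD : 0 < 1 - δ / 10 := by linarith
  have hlog : ∀ {a : ℝ}, 1 ≤ a → 0 ≤ Real.log (a / δ) := fun ha =>
    log_nonneg ((one_le_div hδ0).2 (by linarith))
  have hlog20 : 0 ≤ Real.log (20 * d / δ) := by
    rcases Nat.eq_zero_or_pos d with rfl | hd
    · simp
    · exact hlog (by norm_cast; omega)
  have hα := alphaC_pos
  have hΔ1 := Delta1_nonneg d hδ0 (by linarith) hq
  have hΔ2 := Delta2_nonneg d δ hq
  have hΔinf : 0 ≤ DeltaInf q := by unfold DeltaInf; linarith
  have hl125 : 0 ≤ Real.log (1.25 / δ) := hlog (by norm_num)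
  have hl10 : 0 ≤ Real.log (10 / δ) := hlog (by norm_num)
  have h1 := decaysToZero_inv_sqrt.const_mul
    (by positivity : 0 ≤ Delta2 d δ q * √(2 * Real.log (1.25 / δ)) / √(p * (1 - p)))
  have h2 := ((decaysToZero_inv.const_mul (by positivity : 0 ≤ p * (1 - p))).add
    (decaysToZero_inv.mul decaysToZero_inv)).const_mul
    (by positivity : 0 ≤ alphaC * Delta1 d δ q * (p ^ 2 + (1 - p) ^ 2) /
      (p ^ 2 * (1 - p) ^ 2 * (1 - δ / 10)))
  have h3 := (decaysToZero_S1 hp0 hp1).sqrt.const_mul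
    (by positivity : 0 ≤ Delta2 d δ q / √(1 - δ / 10) * √(2 * Real.log (10 / δ)))
  have h4 := (decaysToZero_S2_div_sq d p hlog20).const_mul
    (by positivity : 0 ≤ 2 / 3 * alphaC * (p ^ 2 + (1 - p) ^ 2) * Real.log (10 / δ) *
      DeltaInf q / (p ^ 2 * (1 - p) ^ 2))
  have h5 := decaysToZero_inv.const_mul
    (by positivity : 0 ≤ 2 * Real.log (1.25 / δ) * DeltaInf q / (p * (1 - p)))
  refine ((((h1.add h2).add h3).add h4).add h5).congr fun n hn => ?_
  unfold eps
  rw [show n * p * (1 - p) = n * (p * (1 - p)) by ring, Real.sqrt_mul hn.le,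
    show 2 * S1 n p * Real.log (10 / δ) = 2 * Real.log (10 / δ) * S1 n p by ring,
    Real.sqrt_mul (x := 2 * Real.log (10 / δ)) (by positivity)]
  field_simp

theorem eps_le_of_nOne_le (d : ℕ) {δ eb p n : ℝ} {q : ℤ} (hδ0 : 0 < δ) (hδ1 : δ ≤ 1)
    (hq : 1 ≤ q) (hp0 : 0 < p) (hp1 : p < 1) (heb : 0 < eb) (hn : (nOne d δ eb q p : ℝ) ≤ n) :
    eps d δ q n p ≤ eb := by
  have hdecay := decaysToZero_eps d hδ0 hδ1 (q := q) (by exact_mod_cast hq) hp0 hp1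
  have hne : {n' : ℕ | 1 ≤ n' ∧ eps d δ q n' p ≤ eb}.Nonempty := by
    obtain ⟨N, hN, hN1⟩ := ((tendsto_natCast_atTop_atTop.eventually
      (hdecay.tendsto.eventually (ge_mem_nhds heb))).and (eventually_ge_atTop 1)).exists
    exact ⟨N, hN1, hN⟩
  obtain ⟨hpos, hle⟩ : nOne d δ eb q p ∈ {n' : ℕ | 1 ≤ n' ∧ eps d δ q n' p ≤ eb} :=
    Nat.sInf_mem hne
  have hpos : (0 : ℝ) < nOne d δ eb q p := by exact_mod_cast hpos
  exact (hdecay.antitoneOn hpos (hpos.trans_le hn) hn).trans hle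

theorem rpow_le_one_add_of_le_Cval {ι : Type*} [Fintype ι] [Nonempty ι] {d : ℕ} (hd : 0 < d)
    {T W ω₀ x : ℝ} {h Pmax : ι → ℝ} (hTW : 0 < T * W) (hω : 0 ≤ ω₀) (hh : ∀ k, 0 ≤ h k)
    (hPmax : ∀ k, 0 ≤ Pmax k) (hx : 0 ≤ x) (hxC : x ≤ Cval d T W ω₀ h Pmax) (k : ι) :
    x ^ ((d : ℝ) / (T * W)) ≤ 1 + Pmax k * h k / ω₀ := by
  have hinf : 0 ≤ Finset.univ.inf' Finset.univ_nonempty (fun k => Pmax k * h k / ω₀) :=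
    Finset.le_inf' _ _ fun j _ => by have := hPmax j; have := hh j; positivity
  calc x ^ ((d : ℝ) / (T * W))
      ≤ 1 + Finset.univ.inf' Finset.univ_nonempty (fun k => Pmax k * h k / ω₀) :=
        (le_rpow_inv_iff_of_pos hx (by linarith) (by positivity)).1 (by rwa [inv_div])
    _ ≤ 1 + Pmax k * h k / ω₀ := add_le_add le_rfl (Finset.inf'_le _ (Finset.mem_univ k))

theorem le_one_add_mul_div_iff {z P c ω : ℝ} (hc : 0 < c) (hω : 0 < ω) :
    z ≤ 1 + P * c / ω ↔ ω * (z - 1) / c ≤ P := by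
  rw [div_le_iff₀ hc, ← sub_le_iff_le_add', le_div_iff₀ hω, mul_comm]

theorem mul_logb_le_mul_logb_of_rpow_le {b x y a c : ℝ} (hb : 1 < b) (hx : 0 < x) (hc : 0 < c)
    (h : x ^ (a / c) ≤ y) : a * logb b x ≤ c * logb b y := by
  have hlog := logb_le_logb_of_le hb (by positivity) h
  rw [logb_rpow_eq_mul_logb_of_pos hx, div_mul_eq_mul_div, div_le_iff₀ hc] at hlog
  linarith

theorem phi2_feasible_imp_phi1_feasible_general {ι : Type*} [Fintype ι] [Nonempty ι] (d : ℕ) (hd : 1 ≤ d)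
    (δ : ℝ) (hδ : δ ∈ Set.Ioo (0 : ℝ) 1) (K : ℕ) (hK : 1 ≤ K)
    (eb T W ω₀ : ℝ) (heb : 0 < eb) (hT : 0 < T) (hW : 0 < W)
    (hω : 0 < ω₀) (h Pmin Pmax : ι → ℝ) (hh : ∀ k, 0 < h k)
    (hPbnd : ∀ k, 0 < Pmin k ∧ Pmin k ≤ Pmax k)
    (q n : ℤ) (p : ℝ) (P : ι → ℝ)
    (hfeas : Phi2Feasible d δ K eb T W ω₀ h Pmin Pmax q n p P) :
    Phi1Feasible d δ K eb T W ω₀ h Pmin Pmax q n p P := by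
  obtain ⟨hq, hn, ⟨hp0, hp1⟩, hqnC, hn_eq, hP⟩ := hfeas
  have hqn : (0 : ℝ) < q + n := by exact_mod_cast (by omega : (0 : ℤ) < q + n)
  have hcap := rpow_le_one_add_of_le_Cval hd (mul_pos hT hW) hω.le (fun k => (hh k).le)
    (fun k => (hPbnd k).1.le.trans (hPbnd k).2) hqn.le hqnC
  -- the clamp at `Pmax k` is never active, so `P k` is at least the power the rate demands
  have hPge (k : ι) : ω₀ * (((q : ℝ) + n) ^ ((d : ℝ) / (T * W)) - 1) / h k ≤ P k :=
    hP k ▸ le_min ((le_one_add_mul_div_iff (hh k) hω).1 (hcap k)) (le_max_right _ _)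
  refine ⟨hq, hn, ⟨hp0, hp1⟩, ?_, ?_, fun k => ?_, fun k => ?_⟩
  · have hKp : (0 : ℝ) < K * p * (1 - p) := by
      have : (0 : ℝ) < K := by exact_mod_cast hK
      positivity
    have hceil := (div_le_iff₀ hKp).1 (Int.ceil_le.1 (hn_eq ▸ le_max_left _ _))
    linarith
  · exact eps_le_of_nOne_le d hδ.1 hδ.2.le (hq.1.trans' one_le_two) hp0 hp1 heb
      (by exact_mod_cast hn_eq ▸ le_max_right _ _)
  · exact mul_logb_le_mul_logb_of_rpow_le one_lt_two hqn (mul_pos hT hW)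
      ((le_one_add_mul_div_iff (hh k) hω).2 (hPge k))
  · rw [hP k]
    exact ⟨le_min (hPbnd k).2 (le_max_left _ _), min_le_left _ _⟩

/-- every Φ2-feasible tuple is Φ1-feasible. -/
theorem phi2_feasible_imp_phi1_feasible {ι : Type*} [Fintype ι] [Nonempty ι] (d : ℕ) (hd : 1 ≤ d)
    (δ : ℝ) (hδ : δ ∈ Set.Ioo (0 : ℝ) 1) (K : ℕ) (hK : 1 ≤ K)
    (hcard : Fintype.card ι = K) (eb T W ω₀ : ℝ) (heb : 0 < eb) (hT : 0 < T) (hW : 0 < W)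
    (hω : 0 < ω₀) (h Pmin Pmax : ι → ℝ) (hh : ∀ k, 0 < h k)
    (hPbnd : ∀ k, 0 < Pmin k ∧ Pmin k ≤ Pmax k)
    (hKsmall : (K : ℝ) < 92 * Real.log (10 * d / δ))
    (hfloor : 4 ≤ ⌊Cval d T W ω₀ h Pmax⌋)
    (q n : ℤ) (p : ℝ) (P : ι → ℝ)
    (hfeas : Phi2Feasible d δ K eb T W ω₀ h Pmin Pmax q n p P) :
    Phi1Feasible d δ K eb T W ω₀ h Pmin Pmax q n p P :=
  phi2_feasible_imp_phi1_feasible_general d hd δ hδ K hK eb T W ω₀ heb hT hW hω h Pmin Pmax hh hPbnd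
    q n p P hfeas
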